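/- Let A₁(η) be as above with all entries nonzero, λ = (10 - 26cos(2η) - 24i·sin(2η))/(26 - 10cos(2η)) = e^{iξ}, and let T_x denote the Chebyshev polynomial of the first kind, T_x(cos ξ) = cos(xξ). For φ₁ ∈ ℂ and the Type 1 eigenfunction Ψ(x) = ((-λ)^x φ₁, -(1 - (3/2)tan η·i)((-λ)^x + (-conj(λ))^x)φ₁, (-conj(λ))^x φ₁) (taking φ₃ = φ₁), the stationary measure is μ(x) = ‖Ψ(x)‖² = (2 + (4 + 9tan²η)·T_x(cos ξ)²)·|φ₁|². -/

import Mathlib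

open Complex Matrix Finset

noncomputable def A₁ (η : ℝ) : Matrix (Fin 3) (Fin 3) ℂ :=
  (1 / 6 : ℂ) • !![-1 - Complex.exp (2 * Complex.I * η), 2 * (1 + Complex.exp (2 * Complex.I * η)),
      5 - Complex.exp (2 * Complex.I * η);
    2 * (1 + Complex.exp (2 * Complex.I * η)), 2 * (1 - 2 * Complex.exp (2 * Complex.I * η)),
      2 * (1 + Complex.exp (2 * Complex.I * η));
    5 - Complex.exp (2 * Complex.I * η), 2 * (1 + Complex.exp (2 * Complex.I * η)),
      -1 - Complex.exp (2 * Complex.I * η)]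

open ComplexConjugate

/-!
Since `λ = e^{iξ}` lies on the unit circle, so does `z = (-λ)^x`, and `(-conj λ)^x = conj z`.
The outer components of `Ψ(x)` therefore have norm `|φ₁|`, while the middle one is
`|1 - (3/2) i tan η| · |2 Re z| · |φ₁|` with `Re z = (-1)^x cos(xξ)`, so `(Re z)² = T_x(cos ξ)²`.
-/

namespace Complex

lemma norm_sq_add_norm_sq_add_norm_sq_of_norm_eq_one {z : ℂ} (hz : ‖z‖ = 1) (c φ : ℂ) :
    ‖z * φ‖ ^ 2 + ‖c * ((z + conj z) * φ)‖ ^ 2 + ‖conj z * φ‖ ^ 2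
      = (2 + 4 * ‖c‖ ^ 2 * z.re ^ 2) * ‖φ‖ ^ 2 := by
  simp only [add_conj, norm_mul, RCLike.norm_conj, hz, norm_real, Real.norm_eq_abs, mul_pow,
    sq_abs]
  ring

lemma norm_neg_exp_mul_I_zpow (ξ : ℝ) (x : ℤ) : ‖(-cexp (ξ * I)) ^ x‖ = 1 := by
  rw [norm_zpow, norm_neg, norm_exp_ofReal_mul_I, _root_.one_zpow]

lemma re_neg_exp_mul_I_zpow_sq (ξ : ℝ) (x : ℤ) :
    ((-cexp (ξ * I)) ^ x).re ^ 2 = (Polynomial.Chebyshev.T ℝ x).eval (Real.cos ξ) ^ 2 := by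
  have hsign : (-1 : ℂ) ^ x = ((-1 : ℝ) ^ x : ℝ) := by push_cast; rfl
  have hexp : cexp (ξ * I) ^ x = cexp (((x * ξ : ℝ) : ℂ) * I) := by
    rw [← exp_int_mul]; push_cast; ring_nf
  rw [neg_eq_neg_one_mul, mul_zpow, hsign, hexp, re_ofReal_mul, exp_ofReal_mul_I_re,
    Polynomial.Chebyshev.T_real_cos, mul_pow, ← sq_abs ((-1 : ℝ) ^ x), abs_neg_one_zpow, one_pow,
    one_mul]

end Complex

theorem A₁_chebyshev_measure_general (η : ℝ)
    (lam : ℂ)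
    (ξ : ℝ) (hξ : lam = Complex.exp (ξ * Complex.I))
    (φ₁ : ℂ)
    (Ψ : ℤ → Fin 3 → ℂ)
    (hΨ : Ψ = fun x => ![(-lam) ^ x * φ₁,
      -((1 : ℂ) - (3 / 2 : ℂ) * Real.tan η * Complex.I) *
        (((-lam) ^ x + (-(starRingEnd ℂ) lam) ^ x) * φ₁),
      (-(starRingEnd ℂ) lam) ^ x * φ₁]) :
    ∀ x : ℤ, ∑ i, ‖Ψ x i‖ ^ 2 =
      (2 + (4 + 9 * Real.tan η ^ 2) * ((Polynomial.Chebyshev.T ℝ x).eval (Real.cos ξ)) ^ 2)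
        * ‖φ₁‖ ^ 2 := by
  intro x
  subst hΨ hξ
  have hconj : (-conj (cexp (ξ * I))) ^ x = conj ((-cexp (ξ * I)) ^ x) := by
    rw [map_zpow₀, map_neg]
  have hcoef : ‖-((1 : ℂ) - (3 / 2 : ℂ) * Real.tan η * I)‖ ^ 2 = 1 + 9 / 4 * Real.tan η ^ 2 := by
    rw [norm_neg, Complex.sq_norm, sub_eq_add_neg, ← neg_mul, ← neg_mul]
    convert normSq_add_mul_I 1 (-(3 / 2 * Real.tan η)) using 2 <;> push_cast <;> ring
  simp only [Fin.sum_univ_three, cons_val_zero, cons_val_one, cons_val_two, head_cons,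
    tail_cons, hconj]
  rw [norm_sq_add_norm_sq_add_norm_sq_of_norm_eq_one (norm_neg_exp_mul_I_zpow ξ x), hcoef,
    re_neg_exp_mul_I_zpow_sq]
  ring

theorem A₁_chebyshev_measure (η : ℝ) (hne : ∀ i j, A₁ η i j ≠ 0) (hcos : Real.cos η ≠ 0)
    (lam : ℂ)
    (hlam : lam = ((10 - 26 * Real.cos (2 * η) : ℂ) - 24 * Real.sin (2 * η) * Complex.I) /
      ((26 - 10 * Real.cos (2 * η) : ℝ) : ℂ))
    (ξ : ℝ) (hξ : lam = Complex.exp (ξ * Complex.I))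
    (φ₁ : ℂ)
    (Ψ : ℤ → Fin 3 → ℂ)
    (hΨ : Ψ = fun x => ![(-lam) ^ x * φ₁,
      -((1 : ℂ) - (3 / 2 : ℂ) * Real.tan η * Complex.I) *
        (((-lam) ^ x + (-(starRingEnd ℂ) lam) ^ x) * φ₁),
      (-(starRingEnd ℂ) lam) ^ x * φ₁]) :
    ∀ x : ℤ, ∑ i, ‖Ψ x i‖ ^ 2 =
      (2 + (4 + 9 * Real.tan η ^ 2) * ((Polynomial.Chebyshev.T ℝ x).eval (Real.cos ξ)) ^ 2)
        * ‖φ₁‖ ^ 2 :=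
  A₁_chebyshev_measure_general η lam ξ hξ φ₁ Ψ hΨ
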